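/- arXiv:2404.03812 — 6 statements merged into one kernel-verified Lean document; each statement's English description precedes it below -/
import Mathlib

section
/- Let r be a vertex of a connected δ-thin graph G, let R and k be integers, and let C_r be an (r,R)-cover of G with |C_r| = 2k−1. Let π_r be the profile of length 2k consisting of all end-vertices of the paths in C_r (namely r together with the 2k−1 other end-vertices), and let P_r be a pairing of π_r for which some vertex m satisfies (x|y)_m ≤ 2δ + ½ for every pair {x,y} ∈ P_r. Then the collection S(P_r) = { σ(x,y) : {x,y} ∈ P_r } of k isometric paths (one between each pair) is an (R + 3δ + 1)-cover of G. -/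
open SimpleGraph

/-- The Gromov product `(x|y)_z = ½(d(x,z) + d(z,y) − d(x,y))` in a graph. -/
noncomputable def gromov {V : Type*} (G : SimpleGraph V) (x y z : V) : ℝ :=
  ((G.dist x z : ℝ) + (G.dist z y : ℝ) - (G.dist x y : ℝ)) / 2

/-- A walk is geodesic (an isometric path) if its length equals the
distance between its end-vertices. -/
def IsGeodesicWalk {V : Type*} (G : SimpleGraph V) {u v : V} (w : G.Walk u v) : Prop :=
  w.length = G.dist u v

/-- `G` is `δ`-thin: for all vertices `x, y, z`, all isometric paths
`pxy = σ(x,y)`, `pxz = σ(x,z)`, `pyz = σ(y,z)` and every vertex `p = pxy.getVert i`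
of `σ(x,y)` (at distance `i` from `x`): if `i ≤ (y|z)_x` then `d(p,q) ≤ δ` where `q` is the
vertex of `σ(x,z)` at distance `i` from `x`, and if `i ≥ (y|z)_x` then `d(p,q') ≤ δ` where
`q'` is the vertex of `σ(y,z)` at distance `d(y,p) = d(x,y) − i` from `y`. -/
def IsThin {V : Type*} (G : SimpleGraph V) (δ : ℝ) : Prop :=
  ∀ (x y z : V) (pxy : G.Walk x y) (pxz : G.Walk x z) (pyz : G.Walk y z),
    IsGeodesicWalk G pxy → IsGeodesicWalk G pxz → IsGeodesicWalk G pyz →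
    ∀ i : ℕ, i ≤ pxy.length →
      ((i : ℝ) ≤ gromov G y z x →
        (G.dist (pxy.getVert i) (pxz.getVert i) : ℝ) ≤ δ) ∧
      (gromov G y z x ≤ (i : ℝ) →
        (G.dist (pxy.getVert i) (pyz.getVert (pxy.length - i)) : ℝ) ≤ δ)

/-- An isometric path of `G`, recorded together with its two end-vertices. -/
structure IsomPath {V : Type*} (G : SimpleGraph V) where
  first : V
  last : V
  walk : G.Walk first last
  isom : walk.length = G.dist first last

/-- A collection `C` of isometric paths is an `R`-cover of `G` if every vertex of `G`
is within distance `R` of the vertex set of some path in `C`. -/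
def IsCover {V : Type*} (G : SimpleGraph V) (R : ℕ) (C : List (IsomPath G)) : Prop :=
  ∀ v : V, ∃ P ∈ C, ∃ w ∈ P.walk.support, G.dist v w ≤ R

/-- `P` is a pairing of the even profile `π`: the entries of `π` (with multiplicity)
are partitioned into the pairs listed in `P`. -/
def IsPairing {V : Type*} (π : List V) (P : List (V × V)) : Prop :=
  (π : Multiset V) = (P.map Prod.fst : List V) + (P.map Prod.snd : List V)

/-- `F_π(v) = Σ_{x ∈ π} d(v,x)`. -/
noncomputable def Fsum {V : Type*} (G : SimpleGraph V) (π : List V) (v : V) : ℕ :=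
  (π.map fun x => G.dist v x).sum

/-- `D_π(P) = Σ_{{a,b} ∈ P} d(a,b)`. -/
noncomputable def Dsum {V : Type*} (G : SimpleGraph V) (P : List (V × V)) : ℕ :=
  (P.map fun p => G.dist p.1 p.2).sum

/-!
Every vertex `u` lies within `R` of a vertex `σᵢ` of some geodesic `σ` from `r` to `x` in the
cover. Let `x` be paired with `y` and `r` with `y₀`. Thinness of the triangles `(r, x, y₀)` and
`(r, x, y)` puts `σᵢ` within `δ` of `σ(r, y₀)` when `i ≤ (x|y₀)_r`, and within `δ` of `σ(x, y)`
when `i ≥ (x|y)_r`. Routing the two products through `m` bounds the gap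
`(x|y)_r − (x|y₀)_r` by `(x|y)_m + (r|y₀)_m ≤ 4δ + 1`; since Gromov products are
half-integers, any `i` in the gap is at most `2δ + 1` steps along `σ` from one of the two
regimes.
-/

namespace SimpleGraph

variable {V : Type*} {G : SimpleGraph V}

lemma Walk.dist_getVert_le_sub {u v : V} (p : G.Walk u v) {i j : ℕ} (h : i ≤ j) :
    G.dist (p.getVert i) (p.getVert j) ≤ j - i := by
  calc G.dist (p.getVert i) (p.getVert j)
      = G.dist (p.getVert i) ((p.drop i).getVert (j - i)) := by
        rw [Walk.drop_getVert, Nat.add_sub_cancel' h]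
    _ ≤ ((p.drop i).take (j - i)).length := dist_le _
    _ ≤ j - i := by simp

lemma Connected.cast_dist_triangle (hG : G.Connected) (u v w : V) :
    (G.dist u w : ℝ) ≤ G.dist u v + G.dist v w := by
  exact_mod_cast hG.dist_triangle

end SimpleGraph

section Gromov

variable {V : Type*} {G : SimpleGraph V}

lemma IsGeodesicWalk.reverse {u v : V} {w : G.Walk u v} (hw : IsGeodesicWalk G w) :
    IsGeodesicWalk G w.reverse := by
  rw [IsGeodesicWalk, Walk.length_reverse, dist_comm]
  exact hw

lemma gromov_comm (x y z : V) : gromov G x y z = gromov G y x z := by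
  simp only [gromov, dist_comm (u := x), dist_comm (u := z) (v := y)]
  ring

lemma gromov_le_dist (hG : G.Connected) (x y z : V) : gromov G x y z ≤ G.dist z x := by
  have := hG.cast_dist_triangle z x y
  rw [gromov, dist_comm (u := x) (v := z)]
  linarith

lemma gromov_sub_gromov_le (hG : G.Connected) (x y y' r m : V) :
    gromov G x y r - gromov G x y' r ≤ gromov G x y m + gromov G r y' m := by
  have hy := hG.cast_dist_triangle r m y
  have hy' := hG.cast_dist_triangle x m y'
  simp only [gromov]
  linarith

lemma exists_nat_two_mul_gromov_eq (hG : G.Connected) (x y z : V) :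
    ∃ n : ℕ, 2 * gromov G x y z = n := by
  have h := hG.dist_triangle (u := x) (v := z) (w := y)
  refine ⟨G.dist x z + G.dist z y - G.dist x y, ?_⟩
  rw [gromov, Nat.cast_sub h]
  push_cast
  ring

lemma exists_nat_le_gromov (hG : G.Connected) (x y z : V) :
    ∃ j : ℕ, gromov G x y z - 1 / 2 ≤ j ∧ (j : ℝ) ≤ gromov G x y z := by
  obtain ⟨n, hn⟩ := exists_nat_two_mul_gromov_eq hG x y z
  have h : 2 * (n / 2) ≤ n ∧ n ≤ 2 * (n / 2) + 1 := by omega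
  have h₁ : (2 * (n / 2 : ℕ) : ℝ) ≤ n := by exact_mod_cast h.1
  have h₂ : (n : ℝ) ≤ 2 * (n / 2 : ℕ) + 1 := by exact_mod_cast h.2
  exact ⟨n / 2, by linarith, by linarith⟩

lemma exists_nat_ge_gromov (hG : G.Connected) (x y z : V) :
    ∃ j : ℕ, gromov G x y z ≤ j ∧ (j : ℝ) ≤ gromov G x y z + 1 / 2 := by
  obtain ⟨n, hn⟩ := exists_nat_two_mul_gromov_eq hG x y z
  have h : n ≤ 2 * ((n + 1) / 2) ∧ 2 * ((n + 1) / 2) ≤ n + 1 := by omega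
  have h₁ : (n : ℝ) ≤ 2 * ((n + 1) / 2 : ℕ) := by exact_mod_cast h.1
  have h₂ : (2 * ((n + 1) / 2 : ℕ) : ℝ) ≤ n + 1 := by exact_mod_cast h.2
  exact ⟨(n + 1) / 2, by linarith, by linarith⟩

end Gromov

namespace IsThin

variable {V : Type*} {G : SimpleGraph V} {δ : ℝ}

lemma exists_near_of_le_gromov (hthin : IsThin G δ) (hG : G.Connected) {r x y : V}
    (σ : G.Walk r x) (T : G.Walk r y) (hσ : IsGeodesicWalk G σ) (hT : IsGeodesicWalk G T)
    {i j : ℕ} (hji : j ≤ i) (hi : i ≤ σ.length) (hj : (j : ℝ) ≤ gromov G x y r) :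
    ∃ z ∈ T.support, (G.dist (σ.getVert i) z : ℝ) ≤ ((i : ℝ) - j) + δ := by
  obtain ⟨W, hW⟩ := hG.exists_walk_length_eq_dist x y
  have hthin_j := (hthin r x y σ T W hσ hT hW j (hji.trans hi)).1 hj
  have hσij : (G.dist (σ.getVert i) (σ.getVert j) : ℝ) ≤ (i : ℝ) - j := by
    rw [dist_comm, ← Nat.cast_sub hji]
    exact_mod_cast σ.dist_getVert_le_sub hji
  exact ⟨T.getVert j, T.getVert_mem_support j,
    by linarith [hG.cast_dist_triangle (σ.getVert i) (σ.getVert j) (T.getVert j)]⟩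

lemma exists_near_of_gromov_le (hthin : IsThin G δ) (hG : G.Connected) {r x y : V}
    (σ : G.Walk r x) (T : G.Walk x y) (hσ : IsGeodesicWalk G σ) (hT : IsGeodesicWalk G T)
    {i j : ℕ} (hij : i ≤ j) (hj : j ≤ σ.length) (hgj : gromov G x y r ≤ j) :
    ∃ z ∈ T.support, (G.dist (σ.getVert i) z : ℝ) ≤ ((j : ℝ) - i) + δ := by
  obtain ⟨W, hW⟩ := hG.exists_walk_length_eq_dist r y
  have hthin_j := (hthin r x y σ W T hσ hW hT j hj).2 hgj
  have hσij : (G.dist (σ.getVert i) (σ.getVert j) : ℝ) ≤ (j : ℝ) - i := by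
    rw [← Nat.cast_sub hij]
    exact_mod_cast σ.dist_getVert_le_sub hij
  exact ⟨T.getVert (σ.length - j), T.getVert_mem_support _,
    by linarith [hG.cast_dist_triangle (σ.getVert i) (σ.getVert j) (T.getVert (σ.length - j))]⟩

lemma exists_near_of_gromov_sub_le (hthin : IsThin G δ) (hG : G.Connected) {r x y y₀ : V}
    (σ : G.Walk r x) (T₀ : G.Walk r y₀) (T : G.Walk x y) (hσ : IsGeodesicWalk G σ)
    (hT₀ : IsGeodesicWalk G T₀) (hT : IsGeodesicWalk G T) {i : ℕ} (hi : i ≤ σ.length)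
    {c : ℝ} (hc : 0 ≤ c) (hgap : gromov G x y r - gromov G x y₀ r ≤ 2 * c) :
    (∃ z ∈ T₀.support, (G.dist (σ.getVert i) z : ℝ) ≤ δ + c + 1 / 2) ∨
      ∃ z ∈ T.support, (G.dist (σ.getVert i) z : ℝ) ≤ δ + c + 1 / 2 := by
  obtain ⟨j₀, hj₀, hj₀g⟩ := exists_nat_le_gromov hG x y₀ r
  obtain ⟨j₁, hj₁g, hj₁⟩ := exists_nat_ge_gromov hG x y r
  by_cases hlow : (i : ℝ) ≤ j₀ + c + 1 / 2
  · left
    rcases le_total i j₀ with hij | hji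
    · obtain ⟨z, hz, hd⟩ := hthin.exists_near_of_le_gromov hG σ T₀ hσ hT₀ le_rfl hi
        ((Nat.cast_le.mpr hij).trans hj₀g)
      exact ⟨z, hz, by linarith⟩
    · obtain ⟨z, hz, hd⟩ := hthin.exists_near_of_le_gromov hG σ T₀ hσ hT₀ hji hi hj₀g
      exact ⟨z, hz, by linarith⟩
  · right
    rcases le_total j₁ i with hji | hij
    · obtain ⟨z, hz, hd⟩ := hthin.exists_near_of_gromov_le hG σ T hσ hT le_rfl hi
        (hj₁g.trans (Nat.cast_le.mpr hji))
      exact ⟨z, hz, by linarith⟩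
    · have hj₁σ : j₁ ≤ σ.length := by
        have hσ' : σ.length = G.dist r x := hσ
        have h : (j₁ : ℝ) < G.dist r x + 1 := by linarith [gromov_le_dist hG x y r]
        have h' : j₁ < G.dist r x + 1 := by exact_mod_cast h
        omega
      obtain ⟨z, hz, hd⟩ := hthin.exists_near_of_gromov_le hG σ T hσ hT hij hj₁σ hj₁g
      exact ⟨z, hz, by linarith⟩

end IsThin

lemma IsPairing.exists_pair_of_mem {V : Type*} {π : List V} {P : List (V × V)}
    (hP : IsPairing π P) {v : V} (hv : v ∈ π) : ∃ p ∈ P, p.1 = v ∨ p.2 = v := by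
  have hv' : v ∈ (π : Multiset V) := by exact_mod_cast hv
  rw [hP, Multiset.mem_add] at hv'
  rcases hv' with h | h
  · obtain ⟨p, hp, rfl⟩ := List.mem_map.mp (by exact_mod_cast h : v ∈ P.map Prod.fst)
    exact ⟨p, hp, Or.inl rfl⟩
  · obtain ⟨p, hp, rfl⟩ := List.mem_map.mp (by exact_mod_cast h : v ∈ P.map Prod.snd)
    exact ⟨p, hp, Or.inr rfl⟩

lemma IsPairing.exists_geodesic_from {V : Type*} {G : SimpleGraph V} {π : List V}
    {P : List (V × V)} (hP : IsPairing π P) {v : V} (hv : v ∈ π) (τ : ∀ x y : V, G.Walk x y)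
    (hτ : ∀ p ∈ P, IsGeodesicWalk G (τ p.1 p.2)) {m : V} {c : ℝ}
    (hm : ∀ p ∈ P, gromov G p.1 p.2 m ≤ c) :
    ∃ p ∈ P, ∃ (y : V) (T : G.Walk v y), IsGeodesicWalk G T ∧
      T.support ⊆ (τ p.1 p.2).support ∧ gromov G v y m ≤ c := by
  obtain ⟨⟨a, b⟩, hp, rfl | rfl⟩ := hP.exists_pair_of_mem hv
  · exact ⟨_, hp, b, τ a b, hτ _ hp, List.Subset.refl _, hm _ hp⟩
  · refine ⟨_, hp, a, (τ a b).reverse, (hτ _ hp).reverse, ?_, ?_⟩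
    · intro z hz
      rwa [Walk.support_reverse, List.mem_reverse] at hz
    · exact (gromov_comm b a m).trans_le (hm (a, b) hp)

theorem stmt_3_general {V : Type*} (G : SimpleGraph V) (hG : G.Connected)
    (δ : ℝ) (hδ : 0 ≤ δ) (hthin : IsThin G δ)
    (r : V) (R : ℕ)
    (L : List ((x : V) × G.Walk r x))
    (hgeo : ∀ Q ∈ L, IsGeodesicWalk G Q.2)
    (hcov : ∀ v : V, ∃ Q ∈ L, ∃ w ∈ Q.2.support, G.dist v w ≤ R)
    (P : List (V × V)) (hP : IsPairing (r :: L.map Sigma.fst) P)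
    (m : V) (hm : ∀ p ∈ P, gromov G p.1 p.2 m ≤ 2 * δ + 1 / 2)
    (τ : ∀ x y : V, G.Walk x y) (hτ : ∀ p ∈ P, IsGeodesicWalk G (τ p.1 p.2)) :
    ∀ u : V, ∃ p ∈ P, ∃ z ∈ (τ p.1 p.2).support,
      (G.dist u z : ℝ) ≤ (R : ℝ) + 3 * δ + 1 := by
  intro u
  obtain ⟨⟨x, σ⟩, hσL, w, hw, hdw⟩ := hcov u
  obtain ⟨i, rfl, hi⟩ := Walk.mem_support_iff_exists_getVert.mp hw
  obtain ⟨p, hp, y, T, hT, hTp, hxy⟩ :=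
    hP.exists_geodesic_from (List.mem_cons_of_mem _ (List.mem_map_of_mem hσL)) τ hτ hm
  obtain ⟨q, hq, y₀, T₀, hT₀, hT₀q, hry₀⟩ := hP.exists_geodesic_from List.mem_cons_self τ hτ hm
  have hgap : gromov G x y r - gromov G x y₀ r ≤ 2 * (2 * δ + 1 / 2) := by
    linarith [gromov_sub_gromov_le hG x y y₀ r m]
  have hdw' : (G.dist u (σ.getVert i) : ℝ) ≤ R := by exact_mod_cast hdw
  rcases hthin.exists_near_of_gromov_sub_le hG σ T₀ T (hgeo _ hσL) hT₀ hT hi (by linarith)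
    hgap with ⟨z, hz, hdz⟩ | ⟨z, hz, hdz⟩
  · exact ⟨q, hq, z, hT₀q hz, by linarith [hG.cast_dist_triangle u (σ.getVert i) z]⟩
  · exact ⟨p, hp, z, hTp hz, by linarith [hG.cast_dist_triangle u (σ.getVert i) z]⟩

/-- Let `C_r` (given as a list `L` of isometric paths rooted at `r`, paired with their
other end-vertices) be an `(r,R)`-cover of the connected `δ`-thin graph `G` with
`|C_r| = 2k−1`, let `π_r = r :: (other end-vertices)` be the profile of length `2k` of
all end-vertices of paths of `C_r`, and let `P` be a pairing of `π_r` such that some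
vertex `m` satisfies `(x|y)_m ≤ 2δ + ½` for every pair `{x,y} ∈ P`. Then the collection
`S(P) = { τ(x,y) : {x,y} ∈ P }` of `k` isometric paths (one between each pair) is an
`(R + 3δ + 1)`-cover of `G`. -/
theorem stmt_3 {V : Type*} (G : SimpleGraph V) (hG : G.Connected)
    (δ : ℝ) (hδ : 0 ≤ δ) (hthin : IsThin G δ)
    (r : V) (R k : ℕ) (hk : 1 ≤ k)
    (L : List ((x : V) × G.Walk r x))
    (hgeo : ∀ Q ∈ L, IsGeodesicWalk G Q.2)
    (hlen : L.length = 2 * k - 1)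
    (hcov : ∀ v : V, ∃ Q ∈ L, ∃ w ∈ Q.2.support, G.dist v w ≤ R)
    (P : List (V × V)) (hP : IsPairing (r :: L.map Sigma.fst) P)
    (m : V) (hm : ∀ p ∈ P, gromov G p.1 p.2 m ≤ 2 * δ + 1 / 2)
    (τ : ∀ x y : V, G.Walk x y) (hτ : ∀ p ∈ P, IsGeodesicWalk G (τ p.1 p.2)) :
    ∀ u : V, ∃ p ∈ P, ∃ z ∈ (τ p.1 p.2).support,
      (G.dist u z : ℝ) ≤ (R : ℝ) + 3 * δ + 1 :=
  stmt_3_general G hG δ hδ hthin r R L hgeo hcov P hP m hm τ hτ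
end

section
/- Every connected δ-thin graph G satisfies the (2δ + ½)-shallow pairing property: for any even profile π of vertices of G there exist a pairing P of π and a vertex v of G such that (x|y)_v ≤ 2δ + ½ for every pair {x,y} ∈ P. -/
open SimpleGraph

/-!
A pairing of `π` together with a base point `v` is chosen so that the largest value `M` of
`2 (x|y)_v` over the pairs `{x,y}` is as small as possible. If `M > 4δ + 1`, first improve
the pairing at `v` by exchanges `{a,b}, {c,d} ↦ {a,c}, {b,d}` until no exchange lowers the
number of pairs attaining `M`. Then, for a pair `{a,b}` attaining `M`, move the base point from
`v` a distance `⌊M/2⌋` towards `a` along a geodesic: thinness of the triangles spanned by `v`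
and the profile shows that every product drops strictly below `M`, contradicting minimality.
-/

section Geometry

variable {V : Type*} {G : SimpleGraph V}

lemma SimpleGraph.Connected.cast_dist_triangle_s5 (hG : G.Connected) (u v w : V) :
    (G.dist u w : ℝ) ≤ G.dist u v + G.dist v w := by
  exact_mod_cast hG.dist_triangle

lemma SimpleGraph.Walk.dist_getVert_eq_of_length_eq_dist (hG : G.Connected) {u v : V}
    (γ : G.Walk u v) (hγ : γ.length = G.dist u v) (i : ℕ) :
    G.dist (γ.getVert i) v = G.dist u v - i := by
  have h₁ := dist_le (γ.take i)
  have h₂ := dist_le (γ.drop i)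
  have h₃ := hG.dist_triangle (u := u) (v := γ.getVert i) (w := v)
  simp only [Walk.take_length, Walk.drop_length] at h₁ h₂
  omega

lemma SimpleGraph.Walk.cast_dist_getVert_eq_of_length_eq_dist (hG : G.Connected) {u v : V}
    (γ : G.Walk u v) (hγ : γ.length = G.dist u v) {i : ℕ} (hi : i ≤ G.dist u v) :
    (G.dist (γ.getVert i) v : ℝ) = G.dist u v - i := by
  rw [γ.dist_getVert_eq_of_length_eq_dist hG hγ, Nat.cast_sub hi]

/-- Twice the Gromov product `(x|y)_v`, a natural number. -/
noncomputable def gromov2 (G : SimpleGraph V) (x y v : V) : ℕ :=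
  G.dist v x + G.dist v y - G.dist x y

lemma cast_gromov2 (hG : G.Connected) (x y v : V) :
    (gromov2 G x y v : ℝ) = G.dist v x + G.dist v y - G.dist x y := by
  have h : G.dist x y ≤ G.dist v x + G.dist v y := by
    have := hG.dist_triangle (u := x) (v := v) (w := y)
    rwa [dist_comm (u := x) (v := v)] at this
  rw [gromov2, Nat.cast_sub h, Nat.cast_add]

lemma gromov_eq_gromov2_div_two (hG : G.Connected) (x y v : V) :
    gromov G x y v = gromov2 G x y v / 2 := by
  rw [cast_gromov2 hG, gromov, dist_comm (u := x)]

lemma gromov2_comm (x y v : V) : gromov2 G x y v = gromov2 G y x v := by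
  rw [gromov2, gromov2, add_comm, dist_comm (u := x)]

lemma gromov2_self (x v : V) : gromov2 G x x v = 2 * G.dist v x := by
  rw [gromov2, dist_self]
  omega

lemma gromov2_le_two_mul_dist (hG : G.Connected) (x y v : V) :
    gromov2 G x y v ≤ 2 * G.dist v x := by
  have := hG.dist_triangle (u := v) (v := x) (w := y)
  rw [gromov2]
  omega

variable {δ : ℝ}

lemma IsThin.dist_getVert_getVert_le (hthin : IsThin G δ) (hG : G.Connected) {v x y : V}
    {γx : G.Walk v x} {γy : G.Walk v y} (hγx : γx.length = G.dist v x)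
    (hγy : γy.length = G.dist v y) {i : ℕ} (hi : 2 * i ≤ gromov2 G x y v) :
    (G.dist (γx.getVert i) (γy.getVert i) : ℝ) ≤ δ := by
  obtain ⟨γxy, hγxy⟩ := hG.exists_walk_length_eq_dist x y
  refine (hthin v x y γx γy γxy hγx hγy hγxy i ?_).1 ?_
  · have := gromov2_le_two_mul_dist hG x y v
    omega
  · have : (2 * i : ℝ) ≤ gromov2 G x y v := by exact_mod_cast hi
    rw [gromov_eq_gromov2_div_two hG]
    linarith

lemma IsThin.dist_getVert_le_of_two_mul_le (hthin : IsThin G δ) (hG : G.Connected)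
    {v x : V} {γ : G.Walk v x} (hγ : γ.length = G.dist v x) {s : ℕ} (z : V)
    (hs : 2 * s ≤ gromov2 G x z v) :
    (G.dist (γ.getVert s) z : ℝ) ≤ δ + G.dist v z - s := by
  obtain ⟨γz, hγz⟩ := hG.exists_walk_length_eq_dist v z
  have hsz : s ≤ G.dist v z := by
    have := gromov2_le_two_mul_dist hG z x v
    rw [gromov2_comm] at this
    omega
  have := hthin.dist_getVert_getVert_le hG hγ hγz hs
  have := γz.cast_dist_getVert_eq_of_length_eq_dist hG hγz hsz
  have := hG.cast_dist_triangle_s5 (γ.getVert s) (γz.getVert s) z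
  linarith

lemma IsThin.dist_getVert_le_of_le_two_mul (hthin : IsThin G δ) (hG : G.Connected)
    {v x : V} {γ : G.Walk v x} (hγ : γ.length = G.dist v x) {s : ℕ} (hs : s ≤ G.dist v x)
    (z : V) (hsz : gromov2 G x z v ≤ 2 * s) :
    (G.dist (γ.getVert s) z : ℝ) ≤ δ + G.dist v z + s - gromov2 G x z v := by
  obtain ⟨γz, hγz⟩ := hG.exists_walk_length_eq_dist v z
  obtain ⟨γxz, hγxz⟩ := hG.exists_walk_length_eq_dist x z
  have hsz' : (gromov2 G x z v : ℝ) ≤ 2 * s := by exact_mod_cast hsz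
  have hnear : (G.dist (γ.getVert s) (γxz.getVert (G.dist v x - s)) : ℝ) ≤ δ := by
    refine hγ ▸ (hthin v x z γ γz γxz hγ hγz hγxz s (hγ ▸ hs)).2 ?_
    rw [gromov_eq_gromov2_div_two hG]
    linarith
  have hj : G.dist v x - s ≤ G.dist x z := by
    have : (G.dist v x : ℝ) ≤ G.dist v z + G.dist x z := by
      rw [dist_comm (u := x)]
      exact hG.cast_dist_triangle_s5 v z x
    have : (G.dist v x : ℝ) ≤ G.dist x z + s := by linarith [cast_gromov2 hG x z v]
    have : G.dist v x ≤ G.dist x z + s := by exact_mod_cast this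
    omega
  have hq := γxz.cast_dist_getVert_eq_of_length_eq_dist hG hγxz hj
  rw [Nat.cast_sub hs] at hq
  have := hG.cast_dist_triangle_s5 (γ.getVert s) (γxz.getVert (G.dist v x - s)) z
  linarith [cast_gromov2 hG x z v]

/-- The four-point condition `(x|z)_v ≥ min ((x|y)_v, (y|z)_v) - δ - 1/2`. -/
lemma IsThin.le_gromov2_add (hthin : IsThin G δ) (hG : G.Connected) {v x y z : V} {m : ℕ}
    (hxy : m ≤ gromov2 G x y v) (hyz : m ≤ gromov2 G y z v) :
    (m : ℝ) ≤ gromov2 G x z v + 2 * δ + 1 := by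
  set i := m / 2
  obtain ⟨γx, hγx⟩ := hG.exists_walk_length_eq_dist v x
  obtain ⟨γy, hγy⟩ := hG.exists_walk_length_eq_dist v y
  obtain ⟨γz, hγz⟩ := hG.exists_walk_length_eq_dist v z
  have hxy' := hthin.dist_getVert_getVert_le hG hγx hγy (i := i) (by omega)
  have hyz' := hthin.dist_getVert_getVert_le hG hγy hγz (i := i) (by omega)
  have hix : i ≤ G.dist v x := by have := gromov2_le_two_mul_dist hG x y v; omega
  have hiz : i ≤ G.dist v z := by
    have := gromov2_le_two_mul_dist hG z y v
    rw [gromov2_comm] at this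
    omega
  have hx := γx.cast_dist_getVert_eq_of_length_eq_dist hG hγx hix
  have hz := γz.cast_dist_getVert_eq_of_length_eq_dist hG hγz hiz
  have hmi : (m : ℝ) ≤ 2 * i + 1 := by exact_mod_cast (by omega : m ≤ 2 * i + 1)
  have : (G.dist x z : ℝ) ≤ G.dist (γx.getVert i) x + G.dist (γx.getVert i) z := by
    rw [dist_comm (u := γx.getVert i) (v := x)]
    exact hG.cast_dist_triangle_s5 x (γx.getVert i) z
  have := hG.cast_dist_triangle_s5 (γx.getVert i) (γy.getVert i) z
  have := hG.cast_dist_triangle_s5 (γy.getVert i) (γz.getVert i) z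
  have := cast_gromov2 hG x z v
  linarith

lemma IsThin.gromov2_getVert_lt_of_le_gromov2 (hthin : IsThin G δ) (hG : G.Connected)
    {v a c d : V} {γ : G.Walk v a} (hγ : γ.length = G.dist v a) {M : ℕ} (hM : 4 * δ + 1 < M)
    (hac : M ≤ gromov2 G a c v) (hcd : gromov2 G c d v ≤ M) :
    gromov2 G c d (γ.getVert (M / 2)) < M := by
  set s := M / 2
  have hMs : (M : ℝ) ≤ 2 * s + 1 := by exact_mod_cast (by omega : M ≤ 2 * s + 1)
  have hsa : s ≤ G.dist v a := by have := gromov2_le_two_mul_dist hG a c v; omega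
  have hc := hthin.dist_getVert_le_of_two_mul_le hG hγ c (s := s) (by omega)
  have hfour := hthin.le_gromov2_add hG (x := a) (y := c) (z := d) (le_trans hcd hac) le_rfl
  have hcd' : (gromov2 G c d v : ℝ) ≤ M := by exact_mod_cast hcd
  rw [← Nat.cast_lt (α := ℝ), cast_gromov2 hG]
  have := cast_gromov2 hG c d v
  rcases le_or_gt (2 * s) (gromov2 G a d v) with had | had
  · have := hthin.dist_getVert_le_of_two_mul_le hG hγ d had
    linarith [(Nat.cast_nonneg s : (0 : ℝ) ≤ s)]
  · have := hthin.dist_getVert_le_of_le_two_mul hG hγ hsa d had.le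
    linarith

lemma IsThin.gromov2_getVert_lt_of_le_gromov2_of_le_gromov2 (hthin : IsThin G δ)
    (hG : G.Connected) {v a b c d : V} {γ : G.Walk v a} (hγ : γ.length = G.dist v a) {M : ℕ}
    (hM : 4 * δ + 1 < M) (hab : M ≤ gromov2 G a b v) (hbc : M ≤ gromov2 G b c v)
    (hbd : M ≤ gromov2 G b d v) (hcd : gromov2 G c d v ≤ M) :
    gromov2 G c d (γ.getVert (M / 2)) < M := by
  set s := M / 2
  have hMs : (M : ℝ) ≤ 2 * s + 1 := by exact_mod_cast (by omega : M ≤ 2 * s + 1)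
  obtain ⟨γb, hγb⟩ := hG.exists_walk_length_eq_dist v b
  have hab' := hthin.dist_getVert_getVert_le hG hγ hγb (i := s) (by omega)
  have hc := hthin.dist_getVert_le_of_two_mul_le hG hγb c (s := s) (by omega)
  have hd := hthin.dist_getVert_le_of_two_mul_le hG hγb d (s := s) (by omega)
  have := hG.cast_dist_triangle_s5 (γ.getVert s) (γb.getVert s) c
  have := hG.cast_dist_triangle_s5 (γ.getVert s) (γb.getVert s) d
  have hcd' : (gromov2 G c d v : ℝ) ≤ M := by exact_mod_cast hcd
  rw [← Nat.cast_lt (α := ℝ), cast_gromov2 hG]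
  linarith [cast_gromov2 hG c d v]

end Geometry

section Pairing

variable {V : Type*}

lemma exists_isPairing : ∀ π : List V, Even π.length → ∃ P : List (V × V), IsPairing π P
  | [], _ => ⟨[], rfl⟩
  | [_], h => by simp at h
  | x :: y :: π, h => by
      obtain ⟨P, hP⟩ := exists_isPairing π (by simpa [Nat.even_add_one] using h)
      refine ⟨(x, y) :: P, ?_⟩
      rw [IsPairing, ← Multiset.cons_coe, ← Multiset.cons_coe, hP]
      simp only [List.map_cons, ← Multiset.cons_coe, Multiset.cons_add, Multiset.add_cons,
        Multiset.cons_swap]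

lemma IsPairing.perm {π : List V} {P Q : List (V × V)} (h : IsPairing π P) (hPQ : P.Perm Q) :
    IsPairing π Q := by
  rw [IsPairing, h, Multiset.coe_eq_coe.2 (hPQ.map Prod.fst),
    Multiset.coe_eq_coe.2 (hPQ.map Prod.snd)]

lemma IsPairing.exchange {π : List V} {a b c d : V} {R : List (V × V)}
    (h : IsPairing π ((a, b) :: (c, d) :: R)) : IsPairing π ((a, c) :: (b, d) :: R) := by
  rw [IsPairing, h]
  simp only [List.map_cons, ← Multiset.cons_coe, Multiset.cons_add, Multiset.add_cons,
    Multiset.cons_swap]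

lemma IsPairing.exchange' {π : List V} {a b c d : V} {R : List (V × V)}
    (h : IsPairing π ((a, b) :: (c, d) :: R)) : IsPairing π ((a, d) :: (b, c) :: R) := by
  rw [IsPairing, h]
  simp only [List.map_cons, ← Multiset.cons_coe, Multiset.cons_add, Multiset.add_cons,
    Multiset.cons_swap]

end Pairing

section Descent

variable {V : Type*} {G : SimpleGraph V}

/-- No pair `(c, d)` can be exchanged with a pair `(a, b)` attaining `M` into two pairs
both below `M`. -/
def IsExchangeStable (G : SimpleGraph V) (v : V) (M : ℕ) (Q : List (V × V)) : Prop :=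
  ∀ a b R, Q.Perm ((a, b) :: R) → gromov2 G a b v = M → ∀ c d, (c, d) ∈ R →
    M ≤ gromov2 G a c v ∨ M ≤ gromov2 G a d v ∨
      (M ≤ gromov2 G b c v ∧ M ≤ gromov2 G b d v)

lemma exists_isPairing_isExchangeStable {π : List V} {P : List (V × V)} {v : V} {M : ℕ}
    (hP : IsPairing π P) (hPM : ∀ p ∈ P, gromov2 G p.1 p.2 v ≤ M) :
    ∃ Q, IsPairing π Q ∧ (∀ p ∈ Q, gromov2 G p.1 p.2 v ≤ M) ∧
      IsExchangeStable G v M Q := by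
  classical
  induction hn : P.countP (fun p => gromov2 G p.1 p.2 v = M) using Nat.strong_induction_on
    generalizing P with
  | _ n ih =>
  by_cases hstable : IsExchangeStable G v M P
  · exact ⟨P, hP, hPM, hstable⟩
  unfold IsExchangeStable at hstable
  push Not at hstable
  obtain ⟨a, b, R, hPR, hab, c, d, hcd, hac, had, hb⟩ := hstable
  obtain ⟨R', hRR'⟩ : ∃ R', R.Perm ((c, d) :: R') := ⟨_, List.perm_cons_erase hcd⟩
  have hPR' : P.Perm ((a, b) :: (c, d) :: R') := hPR.trans (hRR'.cons _)
  have hR'P : ∀ r ∈ R', r ∈ P := fun r hr => hPR'.mem_iff.2 (by simp [hr])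
  have descend : ∀ p q : V × V, IsPairing π (p :: q :: R') → gromov2 G p.1 p.2 v < M →
      gromov2 G q.1 q.2 v < M →
      ∃ Q, IsPairing π Q ∧ (∀ p ∈ Q, gromov2 G p.1 p.2 v ≤ M) ∧
        IsExchangeStable G v M Q :=
    fun p q hQ hp hq => by
      refine ih _ ?_ hQ ?_ rfl
      · rw [← hn, hPR'.countP_eq]
        simp [List.countP_cons, hab, hp.ne, hq.ne]
      · simp only [List.mem_cons, forall_eq_or_imp]
        exact ⟨hp.le, hq.le, fun r hr => hPM r (hR'P r hr)⟩
  rcases lt_or_ge (gromov2 G b d v) M with hbd | hbd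
  · exact descend (a, c) (b, d) (hP.perm hPR').exchange hac hbd
  · have hbc : gromov2 G b c v < M := not_le.1 fun h => (hb h).not_ge hbd
    exact descend (a, d) (b, c) (hP.perm hPR').exchange' had hbc

lemma IsThin.exists_isPairing_gromov2_lt {δ : ℝ} (hthin : IsThin G δ) (hG : G.Connected)
    {π : List V} {P : List (V × V)} {v : V} {M : ℕ} (hP : IsPairing π P)
    (hPM : ∀ p ∈ P, gromov2 G p.1 p.2 v ≤ M) (hM : 4 * δ + 1 < M) :
    ∃ w Q, IsPairing π Q ∧ ∀ p ∈ Q, gromov2 G p.1 p.2 w < M := by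
  classical
  obtain ⟨Q, hQ, hQM, hstable⟩ := exists_isPairing_isExchangeStable hP hPM
  by_cases hlt : ∀ p ∈ Q, gromov2 G p.1 p.2 v < M
  · exact ⟨v, Q, hQ, hlt⟩
  push Not at hlt
  obtain ⟨⟨a, b⟩, habQ, hab⟩ := hlt
  replace hab : gromov2 G a b v = M := le_antisymm (hQM _ habQ) hab
  have hQR := List.perm_cons_erase habQ
  obtain ⟨γ, hγ⟩ := hG.exists_walk_length_eq_dist v a
  refine ⟨γ.getVert (M / 2), Q, hQ, fun ⟨c, d⟩ hcdQ => ?_⟩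
  have hcd := hQM _ hcdQ
  rcases List.mem_cons.1 (hQR.mem_iff.1 hcdQ) with hcd_ab | hcdR
  · cases hcd_ab
    refine hthin.gromov2_getVert_lt_of_le_gromov2 hG hγ hM ?_ hcd
    rw [gromov2_self, ← hab]
    exact gromov2_le_two_mul_dist hG a b v
  rcases hstable a b _ hQR hab c d hcdR with hac | had | ⟨hbc, hbd⟩
  · exact hthin.gromov2_getVert_lt_of_le_gromov2 hG hγ hM hac hcd
  · rw [gromov2_comm] at hcd ⊢
    exact hthin.gromov2_getVert_lt_of_le_gromov2 hG hγ hM had hcd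
  · exact hthin.gromov2_getVert_lt_of_le_gromov2_of_le_gromov2 hG hγ hM hab.ge hbc hbd hcd

end Descent

/-- Every connected `δ`-thin graph satisfies the `(2δ + ½)`-shallow pairing property:
for any even profile `π` there are a pairing `P` of `π` and a vertex `v` with
`(x|y)_v ≤ 2δ + ½` for every pair `{x,y} ∈ P`. -/
theorem stmt_5 {V : Type*} (G : SimpleGraph V) (hG : G.Connected)
    (δ : ℝ) (hδ : 0 ≤ δ) (hthin : IsThin G δ)
    (π : List V) (hπ : Even π.length) :
    ∃ (P : List (V × V)) (v : V), IsPairing π P ∧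
      ∀ p ∈ P, gromov G p.1 p.2 v ≤ 2 * δ + 1 / 2 := by
  classical
  obtain ⟨P₀, hP₀⟩ := exists_isPairing π hπ
  obtain ⟨v₀⟩ := hG.nonempty
  have hex : ∃ M, ∃ v P, IsPairing π P ∧ ∀ p ∈ P, gromov2 G p.1 p.2 v ≤ M :=
    ⟨(P₀.map fun p => gromov2 G p.1 p.2 v₀).sum, v₀, P₀, hP₀,
      fun p hp => List.le_sum_of_mem (List.mem_map_of_mem hp)⟩
  obtain ⟨v, P, hP, hPM⟩ := Nat.find_spec hex
  refine ⟨P, v, hP, fun p hp => ?_⟩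
  have hM : (Nat.find hex : ℝ) ≤ 4 * δ + 1 := by
    by_contra! hM
    obtain ⟨w, Q, hQ, hQM⟩ := hthin.exists_isPairing_gromov2_lt hG hP hPM hM
    have : 1 < Nat.find hex := by exact_mod_cast (by linarith : (1 : ℝ) < Nat.find hex)
    exact Nat.find_min hex (m := Nat.find hex - 1) (by omega)
      ⟨w, Q, hQ, fun q hq => by have := hQM q hq; omega⟩
  have : (gromov2 G p.1 p.2 v : ℝ) ≤ Nat.find hex := by exact_mod_cast hPM p hp
  rw [gromov_eq_gromov2_div_two hG]
  linarith
end

section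
/- Every tree satisfies the pairing property: for any even profile π of vertices of a tree T, there exist a pairing P of π and a vertex v of T such that D_π(P) = F_π(v). -/
open SimpleGraph

/-!
Let `v` be a median of `π`, i.e. a minimiser of `F_π`. Moving from `v` to a neighbour `N`
changes `F_π` by `|π| - 2 · #{x ∈ π beyond N}`, so no branch of `T` at `v` carries more than
half of `π`. A multiset of `2k` coloured items in which no colour other than a neutral one
occurs more than `k` times splits into pairs of distinct colours (or containing a neutral item).
Colouring `x` by the first step from `v` towards `x`, every such pair `{a, b}` has `v` on its
geodesic, so `d(a,b) = d(a,v) + d(v,b)`, and summing over the pairs gives `D_π(P) = F_π(v)`.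
-/

namespace Multiset

variable {α β : Type*} [DecidableEq β]

theorem count_add_count_le_card {x y : β} (h : x ≠ y) (s : Multiset β) :
    s.count x + s.count y ≤ card s := by
  induction s using Multiset.induction_on with
  | empty => simp
  | cons z s ih =>
    simp only [count_cons, card_cons]
    split_ifs <;> grind

theorem exists_eq_cons_cons_of_count_le {c : α → β} {o : β} {k : ℕ} {m : Multiset α}
    (hm : card m = 2 * k + 2) (hc : ∀ x ≠ o, (m.map c).count x ≤ k + 1) :
    ∃ a b m', m = a ::ₘ b ::ₘ m' ∧ (c a = o ∨ c a ≠ c b) ∧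
      ∀ x ≠ o, (m'.map c).count x ≤ k := by
  obtain ⟨a, ham, hmax⟩ :=
    exists_max_image (s := m) (fun z => (m.map c).count (c z))
      (fun h => by simp [h] at hm)
  obtain ⟨m₁, rfl⟩ := exists_cons_of_mem ham
  by_cases hb : ∃ b ∈ m₁, c b ≠ c a
  · obtain ⟨b, hbm, hba⟩ := hb
    obtain ⟨m', rfl⟩ := exists_cons_of_mem hbm
    refine ⟨a, b, m', rfl, Or.inr hba.symm, fun x hx => ?_⟩
    have hcard : card (m'.map c) = 2 * k := by
      simp only [card_cons, card_map] at hm ⊢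
      omega
    have hxc := hc x hx
    simp only [map_cons, count_cons] at hxc hmax
    by_cases hxab : x = c a ∨ x = c b
    · split_ifs at hxc <;> grind
    by_cases hxm : x ∈ m'.map c
    · obtain ⟨z, hz, rfl⟩ := mem_map.mp hxm
      -- a colour of maximal multiplicity bounds `c z`, and the two share the `2k` slots of `m'`
      have hz := hmax z (by simp [hz])
      have := count_add_count_le_card (not_or.mp hxab).1 (m'.map c)
      simp only [if_neg (not_or.mp hxab).1, if_neg (not_or.mp hxab).2, if_neg hba.symm,
        if_pos] at hz
      omega
    · simp [count_eq_zero_of_notMem hxm]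
  · push Not at hb
    have hall : ∀ y ∈ (a ::ₘ m₁).map c, y = c a := by simpa using hb
    have hco : c a = o := by
      by_contra hne
      have := hc (c a) hne
      rw [count_eq_card.mpr fun y hy => (hall y hy).symm] at this
      simp only [map_cons, card_cons, card_map] at this hm
      omega
    have hm₁ : 0 < card m₁ := by
      simp only [card_cons] at hm
      omega
    obtain ⟨b, hbm⟩ := card_pos_iff_exists_mem.mp hm₁
    obtain ⟨m', rfl⟩ := exists_cons_of_mem hbm
    refine ⟨a, b, m', rfl, Or.inl hco, fun x hx => ?_⟩
    rw [count_eq_zero.mpr fun hxm => hx (hco ▸ hall x (by simp [hxm]))]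
    exact Nat.zero_le k

theorem exists_pairing_of_count_le (c : α → β) (o : β) (k : ℕ) (m : Multiset α)
    (hm : card m = 2 * k) (hc : ∀ x ≠ o, (m.map c).count x ≤ k) :
    ∃ P : List (α × α), m = (P.map Prod.fst : Multiset α) + (P.map Prod.snd : Multiset α) ∧
      ∀ p ∈ P, c p.1 = o ∨ c p.1 ≠ c p.2 := by
  induction k generalizing m with
  | zero => exact ⟨[], by simpa using hm, by simp⟩
  | succ k ih =>
    obtain ⟨a, b, m', rfl, hab, hc'⟩ := exists_eq_cons_cons_of_count_le hm hc
    obtain ⟨P, rfl, hP⟩ := ih m' (by simp only [card_cons] at hm; omega) hc'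
    refine ⟨(a, b) :: P, ?_, by simpa [hab] using hP⟩
    simp only [List.map_cons, ← cons_coe, cons_add, add_cons]
    exact cons_swap _ _ _

end Multiset

namespace SimpleGraph

variable {V : Type*} {G : SimpleGraph V}

theorem Walk.IsPath.reverse_append {u v w : V} {p : G.Walk u v} {q : G.Walk u w}
    (hp : p.IsPath) (hq : q.IsPath) (h : ∀ x ∈ p.support, x ∈ q.support → x = u) :
    (p.reverse.append q).IsPath := by
  have hq' := hq.support_nodup
  rw [← Walk.cons_tail_support q, List.nodup_cons] at hq'
  rw [Walk.isPath_def, Walk.support_append, Walk.support_reverse, List.nodup_append]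
  refine ⟨List.nodup_reverse.mpr hp.support_nodup, hq'.2, fun x hx y hy hxy => hq'.1 ?_⟩
  subst hxy
  exact h x (List.mem_reverse.mp hx) (List.mem_of_mem_tail hy) ▸ hy

theorem IsTree.length_eq_dist_of_isPath (hG : G.IsTree) {u v : V} {p : G.Walk u v}
    (hp : p.IsPath) : p.length = G.dist u v := by
  obtain ⟨q, hq, hql⟩ := (hG.connected u v).exists_path_of_dist
  rw [(hG.existsUnique_path u v).unique hp hq, hql]

/-- The neighbour of `v` on the path from `v` to `z`; it is `v` itself when `z = v`. -/
noncomputable def IsTree.towards (hG : G.IsTree) (v z : V) : V :=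
  (hG.existsUnique_path v z).exists.choose.snd

namespace IsTree

variable (hG : G.IsTree)

theorem towards_eq_snd {v z : V} {p : G.Walk v z} (hp : p.IsPath) : hG.towards v z = p.snd := by
  rw [towards, (hG.existsUnique_path v z).unique (hG.existsUnique_path v z).exists.choose_spec hp]

theorem towards_self (v : V) : hG.towards v v = v :=
  hG.towards_eq_snd (Walk.IsPath.nil (u := v))

theorem adj_towards {v z : V} (h : z ≠ v) : G.Adj v (hG.towards v z) := by
  obtain ⟨p, hp, -⟩ := (hG.connected v z).exists_path_of_dist
  rw [hG.towards_eq_snd hp]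
  exact Walk.adj_snd (Walk.not_nil_of_ne h.symm)

theorem towards_eq_self_iff {v z : V} : hG.towards v z = v ↔ z = v := by
  refine ⟨fun h => ?_, fun h => h ▸ hG.towards_self v⟩
  by_contra hz
  exact (hG.adj_towards hz).ne h.symm

theorem dist_towards_add_one {v z : V} (h : z ≠ v) :
    G.dist (hG.towards v z) z + 1 = G.dist v z := by
  obtain ⟨p, hp, hpl⟩ := (hG.connected v z).exists_path_of_dist
  have hnil : ¬p.Nil := Walk.not_nil_of_ne h.symm
  have hle : G.dist p.snd z + 1 ≤ G.dist v z := by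
    rw [← hpl, ← Walk.length_tail_add_one hnil]
    exact Nat.add_le_add_right (dist_le p.tail) 1
  rw [hG.towards_eq_snd hp]
  have := hG.dist_eq_dist_add_one_of_adj z (Walk.adj_snd hnil)
  rw [dist_comm (u := z), dist_comm (u := z)] at this
  omega

theorem dist_eq_add_one_of_towards_ne {v z N : V} (hN : G.Adj v N) (h : hG.towards v z ≠ N) :
    G.dist N z = G.dist v z + 1 := by
  have := hG.dist_eq_dist_add_one_of_adj z hN
  rw [dist_comm (u := z), dist_comm (u := z)] at this
  refine this.resolve_left fun hvN => h ?_
  obtain ⟨q, -, hql⟩ := (hG.connected N z).exists_path_of_dist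
  have hp : (q.cons hN).IsPath := Walk.isPath_of_length_eq_dist _ (by simp [hql, hvN])
  rw [hG.towards_eq_snd hp, Walk.snd_cons]

theorem dist_eq_dist_add_dist_of_towards_ne {v a b : V} (h : hG.towards v a ≠ hG.towards v b) :
    G.dist a b = G.dist a v + G.dist v b := by
  classical
  obtain ⟨p, hp, hpl⟩ := (hG.connected v a).exists_path_of_dist
  obtain ⟨q, hq, hql⟩ := (hG.connected v b).exists_path_of_dist
  have hmeet : ∀ x ∈ p.support, x ∈ q.support → x = v := by
    intro x hxp hxq
    by_contra hxv
    have hpq := (hG.existsUnique_path v x).unique (hp.takeUntil hxp) (hq.takeUntil hxq)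
    apply h
    rw [hG.towards_eq_snd hp, hG.towards_eq_snd hq, ← Walk.snd_takeUntil hxv p hxp,
      ← Walk.snd_takeUntil hxv q hxq, hpq]
  have := hG.length_eq_dist_of_isPath (hp.reverse_append hq hmeet)
  rw [Walk.length_append, Walk.length_reverse, hpl, hql] at this
  rw [← this, dist_comm]

end IsTree

end SimpleGraph

section Median

open SimpleGraph

variable {V : Type*} [DecidableEq V] {T : SimpleGraph V}

theorem Fsum_add_length (hT : T.IsTree) {v N : V} (hN : T.Adj v N) (π : List V) :
    Fsum T π v + π.length = Fsum T π N + 2 * (π.map (hT.towards v)).count N := by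
  induction π with
  | nil => simp [Fsum]
  | cons z π ih =>
    have hz : T.dist v z + 1 = T.dist N z + 2 * if hT.towards v z = N then 1 else 0 := by
      split_ifs with hz
      · have hzv : z ≠ v := fun hzv => hN.ne (by rw [← hz, hzv, hT.towards_self])
        have := hT.dist_towards_add_one hzv
        rw [hz] at this
        omega
      · have := hT.dist_eq_add_one_of_towards_ne hN hz
        omega
    simp only [Fsum, List.map_cons, List.sum_cons, List.length_cons, List.count_cons,
      beq_iff_eq] at ih ⊢
    omega

theorem exists_two_mul_count_towards_le (hT : T.IsTree) (π : List V) :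
    ∃ v, ∀ N ≠ v, 2 * (π.map (hT.towards v)).count N ≤ π.length := by
  have := hT.connected.nonempty
  obtain ⟨v, hv⟩ : ∃ v, ∀ w, Fsum T π v ≤ Fsum T π w :=
    ⟨_, fun w => Function.argmin_le _ w⟩
  refine ⟨v, fun N hNv => ?_⟩
  by_cases hN : N ∈ π.map (hT.towards v)
  · obtain ⟨z, -, rfl⟩ := List.mem_map.mp hN
    have hz : z ≠ v := fun hz => hNv (hz ▸ hT.towards_self v)
    have := Fsum_add_length hT (hT.adj_towards hz) π
    have := hv (hT.towards v z)
    omega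
  · simp [List.count_eq_zero_of_not_mem hN]

end Median

theorem Dsum_eq_Fsum_of_isPairing {V : Type*} {G : SimpleGraph V} {π : List V} {P : List (V × V)}
    (hP : IsPairing π P) (v : V) (hv : ∀ p ∈ P, G.dist p.1 p.2 = G.dist p.1 v + G.dist v p.2) :
    Dsum G P = Fsum G π v := by
  have hF : Fsum G π v = ((π : Multiset V).map (G.dist v)).sum := by simp [Fsum]
  rw [hF, hP, Dsum, List.map_congr_left hv, List.sum_map_add]
  simp [Multiset.map_coe, List.map_map, Function.comp_def, SimpleGraph.dist_comm]

/-- Every tree satisfies the pairing property: for any even profile `π` of vertices of a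
tree `T`, there are a pairing `P` of `π` and a vertex `v` with `D_π(P) = F_π(v)`. -/
theorem stmt_8 {V : Type*} (T : SimpleGraph V) (hT : T.IsTree)
    (π : List V) (hπ : Even π.length) :
    ∃ (P : List (V × V)) (v : V), IsPairing π P ∧ Dsum T P = Fsum T π v := by
  classical
  obtain ⟨k, hk⟩ := hπ
  obtain ⟨v, hv⟩ := exists_two_mul_count_towards_le hT π
  obtain ⟨P, hP, hgood⟩ := Multiset.exists_pairing_of_count_le (hT.towards v) v k π
    (by simp [hk, two_mul]) fun N hN => by
      have := hv N hN
      simp only [Multiset.map_coe, Multiset.coe_count]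
      omega
  refine ⟨P, v, hP, Dsum_eq_Fsum_of_isPairing hP v fun p hp => ?_⟩
  rcases hgood p hp with hp1 | hne
  · rw [hT.towards_eq_self_iff.mp hp1, SimpleGraph.dist_self, zero_add]
  · exact hT.dist_eq_dist_add_dist_of_towards_ne hne
end

section
/- Let G be a connected graph, let ℓ ≥ 1 and let H = G_ℓ be the ℓ-subdivision of G. For integers m and k, if G has an m-cover of size k, then H has an (mℓ + ⌊ℓ/2⌋)-cover of size k. -/
open SimpleGraph

/-- `H` is the `ℓ`-subdivision `G_ℓ` of `G`, witnessed by the embedding `φ` of the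
original vertices and, for each edge `uv` of `G`, the replacement path `σ u v h` of
length `ℓ` in `H` from `φ u` to `φ v`. -/
structure IsSubdivision {V W : Type*} (G : SimpleGraph V) (H : SimpleGraph W) (ℓ : ℕ)
    (φ : V → W) (σ : ∀ u v : V, G.Adj u v → H.Walk (φ u) (φ v)) : Prop where
  one_le : 1 ≤ ℓ
  inj : Function.Injective φ
  len : ∀ u v (h : G.Adj u v), (σ u v h).length = ℓ
  isPath : ∀ u v (h : G.Adj u v), (σ u v h).IsPath
  symm : ∀ u v (h : G.Adj u v), σ v u h.symm = (σ u v h).reverse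
  /-- replacement paths of distinct edges meet only in original vertices -/
  disjoint : ∀ u v (h : G.Adj u v), ∀ u' v' (h' : G.Adj u' v'), s(u, v) ≠ s(u', v') →
    ∀ w : W, w ∈ (σ u v h).support → w ∈ (σ u' v' h').support → w ∈ Set.range φ
  /-- the only original vertices on a replacement path are its two ends -/
  ends : ∀ u v (h : G.Adj u v), ∀ w ∈ (σ u v h).support,
    w ∈ Set.range φ → w = φ u ∨ w = φ v
  /-- every vertex of `H` is original or lies on a replacement path -/
  cover : ∀ w : W, w ∈ Set.range φ ∨ ∃ u v h, w ∈ (σ u v h).support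
  /-- the edges of `H` are exactly the edges of the replacement paths -/
  adj_iff : ∀ a b : W, H.Adj a b ↔ ∃ u v h, s(a, b) ∈ (σ u v h).edges

/-- The walk of `H = G_ℓ` obtained from a walk of `G` by replacing each edge by its
replacement path: the `ℓ`-subdivision of the given walk. -/
def subdivWalk {V W : Type*} {G : SimpleGraph V} {H : SimpleGraph W} {φ : V → W}
    (σ : ∀ u v : V, G.Adj u v → H.Walk (φ u) (φ v)) :
    ∀ {u v : V}, G.Walk u v → H.Walk (φ u) (φ v)
  | _, _, SimpleGraph.Walk.nil => SimpleGraph.Walk.nil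
  | _, _, SimpleGraph.Walk.cons h q => (σ _ _ h).append (subdivWalk σ q)

/-! The walk `subdivWalk σ p` has length `ℓ · |p|`, so `d_H(φ u, φ v) ≤ ℓ · d_G(u, v)`.
For the reverse inequality, give the vertex at position `i` of the replacement path of `uv`
the potential `min (i + ℓ · d(u, a)) (ℓ - i + ℓ · d(v, a))`: it vanishes at `φ a`, changes
by at most one along every edge of `H`, and equals `ℓ · d(u, a)` at `φ u`. Hence `φ` scales
distances by exactly `ℓ`, so subdividing the paths of an `m`-cover of `G` gives isometric
paths of `H`; every vertex of `H` lies within `⌊ℓ/2⌋` of an original vertex, which is within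
`mℓ` of one of them. -/

namespace SimpleGraph.Walk.IsPath

variable {V : Type*} {G : SimpleGraph V} {x y b : V} {p : G.Walk x y}

lemma eq_getVert_of_mk_mem_edges (hp : p.IsPath) {i : ℕ} (hi : i ≤ p.length)
    (he : s(p.getVert i, b) ∈ p.edges) :
    b = p.getVert (i - 1) ∨ b = p.getVert (i + 1) := by
  obtain ⟨j, hj, hij⟩ := p.mk_mem_edges_iff_exists.mp he
  rcases Sym2.eq_iff.mp hij with ⟨hji, rfl⟩ | ⟨rfl, hji⟩
  · rw [hp.getVert_injOn (by simp only [Set.mem_ofPred_eq]; omega) hi hji]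
    exact Or.inr rfl
  · rw [← hp.getVert_injOn (by simp only [Set.mem_ofPred_eq]; omega) hi hji]
    exact Or.inl rfl

end SimpleGraph.Walk.IsPath

section SubdivWalk

variable {V W : Type*} {G : SimpleGraph V} {H : SimpleGraph W} {φ : V → W} {u v : V}

lemma map_mem_support_subdivWalk (σ : ∀ u v : V, G.Adj u v → H.Walk (φ u) (φ v)) {x : V}
    (p : G.Walk u v) (hx : x ∈ p.support) :
    φ x ∈ (subdivWalk σ p).support := by
  induction p with
  | nil => simp_all [subdivWalk]
  | cons h q ih =>
    rw [Walk.support_cons, List.mem_cons] at hx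
    rw [subdivWalk, Walk.mem_support_append_iff]
    rcases hx with rfl | hx
    · exact Or.inl (Walk.start_mem_support _)
    · exact Or.inr (ih hx)

lemma SimpleGraph.Reachable.subdiv (huv : G.Reachable u v)
    (σ : ∀ u v : V, G.Adj u v → H.Walk (φ u) (φ v)) : H.Reachable (φ u) (φ v) :=
  huv.elim fun p => ⟨subdivWalk σ p⟩

end SubdivWalk

namespace IsSubdivision

variable {V W : Type*} {G : SimpleGraph V} {H : SimpleGraph W} {ℓ : ℕ} {φ : V → W}
  {σ : ∀ u v : V, G.Adj u v → H.Walk (φ u) (φ v)}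

lemma mk_mem_edges_flip (hs : IsSubdivision G H ℓ φ σ) {u v : V} (h : G.Adj u v) {x y : W} :
    s(x, y) ∈ (σ v u h.symm).edges ↔ s(x, y) ∈ (σ u v h).edges := by
  rw [hs.symm, Walk.edges_reverse, List.mem_reverse]

lemma eq_zero_or_eq_of_getVert_mem_range (hs : IsSubdivision G H ℓ φ σ) {u v : V}
    (h : G.Adj u v) {i : ℕ} (hi : i ≤ ℓ) (hrange : (σ u v h).getVert i ∈ Set.range φ) :
    i = 0 ∨ i = ℓ := by
  have hp := hs.isPath u v h
  have hil : i ≤ (σ u v h).length := (hs.len u v h).symm ▸ hi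
  rcases hs.ends u v h _ ((σ u v h).getVert_mem_support i) hrange with hu | hv
  · exact Or.inl ((hp.getVert_eq_start_iff hil).mp hu)
  · exact Or.inr ((hp.getVert_eq_end_iff hil).mp hv ▸ hs.len u v h)

lemma getVert_one_eq_of_adj (hs : IsSubdivision G H ℓ φ σ) {u : V} {b : W}
    (hadj : H.Adj (φ u) b) : ∃ v h, b = (σ u v h).getVert 1 := by
  obtain ⟨u₀, v₀, h₀, he₀⟩ := (hs.adj_iff _ b).mp hadj
  obtain ⟨v, h, he⟩ : ∃ v h, s(φ u, b) ∈ (σ u v h).edges := by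
    rcases hs.ends u₀ v₀ h₀ _ (Walk.fst_mem_support_of_mem_edges _ he₀) ⟨u, rfl⟩ with
      hu | hv
    · obtain rfl := hs.inj hu
      exact ⟨v₀, h₀, he₀⟩
    · obtain rfl := hs.inj hv
      exact ⟨u₀, h₀.symm, (hs.mk_mem_edges_flip h₀).mpr he₀⟩
  refine ⟨v, h, ?_⟩
  have he₀ : s((σ u v h).getVert 0, b) ∈ (σ u v h).edges := by rwa [Walk.getVert_zero]
  rcases (hs.isPath u v h).eq_getVert_of_mk_mem_edges (Nat.zero_le _) he₀ with hb | hb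
  · exact absurd (hb.trans (σ u v h).getVert_zero).symm hadj.ne
  · exact hb

lemma getVert_pred_or_succ_of_adj (hs : IsSubdivision G H ℓ φ σ) {u v : V} (h : G.Adj u v)
    {i : ℕ} (hi0 : 0 < i) (hiℓ : i < ℓ) {b : W} (hadj : H.Adj ((σ u v h).getVert i) b) :
    b = (σ u v h).getVert (i - 1) ∨ b = (σ u v h).getVert (i + 1) := by
  have hnot : (σ u v h).getVert i ∉ Set.range φ := fun hr => by
    rcases hs.eq_zero_or_eq_of_getVert_mem_range h hiℓ.le hr with h0 | hℓ <;> omega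
  obtain ⟨u', v', h', he'⟩ := (hs.adj_iff _ b).mp hadj
  -- an interior vertex lies on a single replacement path
  have hsame : s(u, v) = s(u', v') := by
    by_contra hne
    exact hnot (hs.disjoint u v h u' v' h' hne _ ((σ u v h).getVert_mem_support i)
      (Walk.fst_mem_support_of_mem_edges _ he'))
  have he : s((σ u v h).getVert i, b) ∈ (σ u v h).edges := by
    rcases Sym2.eq_iff.mp hsame with ⟨rfl, rfl⟩ | ⟨rfl, rfl⟩
    · exact he'
    · exact (hs.mk_mem_edges_flip h).mp he'
  exact (hs.isPath u v h).eq_getVert_of_mk_mem_edges (hiℓ.le.trans_eq (hs.len u v h).symm)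
    he

lemma length_subdivWalk (hs : IsSubdivision G H ℓ φ σ) {u v : V} (p : G.Walk u v) :
    (subdivWalk σ p).length = ℓ * p.length := by
  induction p with
  | nil => rfl
  | cons h q ih =>
    rw [subdivWalk, Walk.length_append, hs.len, ih, Walk.length_cons]
    ring

lemma dist_le_mul_dist (hs : IsSubdivision G H ℓ φ σ) {u v : V} (huv : G.Reachable u v) :
    H.dist (φ u) (φ v) ≤ ℓ * G.dist u v := by
  obtain ⟨p, hp⟩ := huv.exists_walk_length_eq_dist
  exact hp ▸ hs.length_subdivWalk p ▸ dist_le (subdivWalk σ p)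

variable (σ ℓ) in
-- Quantifying over every position of `w` spares proving that the potential is well defined.
def PotentialLE (a : V) (w : W) (n : ℕ) : Prop :=
  ∀ u v (h : G.Adj u v) i, i ≤ ℓ → (σ u v h).getVert i = w →
    min (i + ℓ * G.dist u a) (ℓ - i + ℓ * G.dist v a) ≤ n

lemma potentialLE_map_self (hs : IsSubdivision G H ℓ φ σ) (a : V) :
    PotentialLE ℓ σ a (φ a) 0 := by
  intro u v h i hi hw
  rcases hs.eq_zero_or_eq_of_getVert_mem_range h hi (hw ▸ ⟨a, rfl⟩) with rfl | rfl
  · obtain rfl : u = a := hs.inj ((σ u v h).getVert_zero ▸ hw)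
    simp
  · obtain rfl : v = a := hs.inj (by rwa [← hs.len u v h, Walk.getVert_length] at hw)
    simp

lemma mul_dist_le_of_adj (hs : IsSubdivision G H ℓ φ σ) {a u : V} {b : W} {n : ℕ}
    (hadj : H.Adj (φ u) b) (hb : PotentialLE ℓ σ a b n) : ℓ * G.dist u a ≤ n + 1 := by
  obtain ⟨v, h, rfl⟩ := hs.getVert_one_eq_of_adj hadj
  have hpot := hb u v h 1 hs.one_le rfl
  have htri : G.dist u a ≤ 1 + G.dist v a := by
    simpa [dist_eq_one_iff_adj.mpr h] using h.reachable.dist_triangle_left a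
  have hmul := Nat.mul_le_mul_left ℓ htri
  rw [Nat.mul_add, Nat.mul_one] at hmul
  have := hs.one_le
  omega

lemma potentialLE_of_adj (hs : IsSubdivision G H ℓ φ σ) {a : V} {w b : W} {n : ℕ}
    (hadj : H.Adj w b) (hb : PotentialLE ℓ σ a b n) : PotentialLE ℓ σ a w (n + 1) := by
  intro u v h i hi hw
  subst hw
  rcases Nat.eq_zero_or_pos i with rfl | hi0
  · have := hs.mul_dist_le_of_adj ((σ u v h).getVert_zero ▸ hadj) hb
    omega
  rcases hi.lt_or_eq with hiℓ | rfl
  · rcases hs.getVert_pred_or_succ_of_adj h hi0 hiℓ hadj with rfl | rfl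
    · have := hb u v h (i - 1) (by omega) rfl
      omega
    · have := hb u v h (i + 1) hiℓ rfl
      omega
  · rw [← hs.len u v h, Walk.getVert_length] at hadj
    have := hs.mul_dist_le_of_adj hadj hb
    omega

lemma potentialLE_length (hs : IsSubdivision G H ℓ φ σ) {a : V} {w : W}
    (q : H.Walk w (φ a)) : PotentialLE ℓ σ a w q.length := by
  generalize hc : φ a = c at q
  induction q with
  | nil => exact hc ▸ hs.potentialLE_map_self a
  | cons hadj q ih => exact hs.potentialLE_of_adj hadj (ih hc)

lemma mul_dist_le_length (hs : IsSubdivision G H ℓ φ σ) {u a : V}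
    (q : H.Walk (φ u) (φ a)) : ℓ * G.dist u a ≤ q.length := by
  by_cases hua : u = a
  · simp [hua]
  have hq : ¬q.Nil := Walk.not_nil_of_ne (hs.inj.ne hua)
  rw [← q.length_tail_add_one hq]
  exact hs.mul_dist_le_of_adj (q.adj_snd hq) (hs.potentialLE_length q.tail)

lemma dist_map (hs : IsSubdivision G H ℓ φ σ) {u v : V} (huv : G.Reachable u v) :
    H.dist (φ u) (φ v) = ℓ * G.dist u v := by
  refine (hs.dist_le_mul_dist huv).antisymm ?_
  obtain ⟨q, hq⟩ := (huv.subdiv σ).exists_walk_length_eq_dist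
  exact hq ▸ hs.mul_dist_le_length q

lemma exists_dist_map_le (hs : IsSubdivision G H ℓ φ σ) (w : W) :
    ∃ u : V, H.dist w (φ u) ≤ ℓ / 2 := by
  classical
  rcases hs.cover w with ⟨u, rfl⟩ | ⟨u, v, h, hw⟩
  · exact ⟨u, by simp⟩
  · have hsplit := congrArg Walk.length ((σ u v h).take_spec hw)
    rw [Walk.length_append, hs.len] at hsplit
    have hu := dist_le ((σ u v h).takeUntil w hw).reverse
    have hv := dist_le ((σ u v h).dropUntil w hw)
    rw [Walk.length_reverse] at hu
    rcases le_or_gt ((σ u v h).takeUntil w hw).length (ℓ / 2) with hc | hc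
    · exact ⟨u, by omega⟩
    · exact ⟨v, by omega⟩

end IsSubdivision

theorem stmt_11_general {V W : Type*} (G : SimpleGraph V) (hG : G.Connected)
    (H : SimpleGraph W) (ℓ : ℕ)
    (φ : V → W) (σ : ∀ u v : V, G.Adj u v → H.Walk (φ u) (φ v))
    (hsub : IsSubdivision G H ℓ φ σ)
    (m k : ℕ) (C : List (IsomPath G)) (hk : C.length = k) (hcov : IsCover G m C) :
    ∃ C' : List (IsomPath H), C'.length = k ∧ IsCover H (m * ℓ + ℓ / 2) C' := by
  refine ⟨C.map fun P => ⟨φ P.first, φ P.last, subdivWalk σ P.walk, by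
      rw [hsub.length_subdivWalk, P.isom, hsub.dist_map ⟨P.walk⟩]⟩, by simp [hk], ?_⟩
  intro w
  obtain ⟨u, hwu⟩ := hsub.exists_dist_map_le w
  obtain ⟨P, hP, x, hx, hux⟩ := hcov u
  refine ⟨_, List.mem_map_of_mem hP, φ x, map_mem_support_subdivWalk σ P.walk hx, ?_⟩
  calc H.dist w (φ x) ≤ H.dist w (φ u) + H.dist (φ u) (φ x) :=
        ((hG u x).subdiv σ).dist_triangle_right w
    _ ≤ ℓ / 2 + ℓ * m := by
        rw [hsub.dist_map (hG u x)]
        exact Nat.add_le_add hwu (Nat.mul_le_mul_left ℓ hux)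
    _ = m * ℓ + ℓ / 2 := by ring

/-- If `H = G_ℓ` is the `ℓ`-subdivision (`ℓ ≥ 1`) of a connected graph `G` and `G` has
an `m`-cover of size `k`, then `H` has an `(mℓ + ⌊ℓ/2⌋)`-cover of size `k`. -/
theorem stmt_11 {V W : Type*} (G : SimpleGraph V) (hG : G.Connected)
    (H : SimpleGraph W) (ℓ : ℕ) (hℓ : 1 ≤ ℓ)
    (φ : V → W) (σ : ∀ u v : V, G.Adj u v → H.Walk (φ u) (φ v))
    (hsub : IsSubdivision G H ℓ φ σ)
    (m k : ℕ) (C : List (IsomPath G)) (hk : C.length = k) (hcov : IsCover G m C) :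
    ∃ C' : List (IsomPath H), C'.length = k ∧ IsCover H (m * ℓ + ℓ / 2) C' :=
  stmt_11_general G hG H ℓ φ σ hsub m k C hk hcov
end

section
/- Let G be a connected graph, let ℓ ≥ 1 and let H = G_ℓ be the ℓ-subdivision of G. Let P be an isometric path of H between two original vertices u and v, and let Q = G(P) be the path of G whose ℓ-subdivision is P. If w is an original vertex such that the distance in H from w to the vertex set of P is strictly less than (r+1)ℓ for some positive integer r, then the distance in G from w to the vertex set of Q is at most r. -/
open SimpleGraph

/-!
An `H`-walk from an original vertex `φ x` to `φ c` can only change original vertices by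
traversing a whole replacement path, so it has length at least `ℓ · d_G(x, c)`. A walk
starting inside the replacement path of an edge `ab` must first leave through `φ a` or
`φ b`; hence if `φ w` is within `(r + 1)ℓ` of a vertex of `P`, that vertex is original or
lies on the replacement path of an edge of `Q`, and an end `c` of that edge (a vertex of
`Q`) satisfies `ℓ · d_G(c, w) < (r + 1)ℓ`.
-/

namespace SimpleGraph.Walk

variable {W : Type*} [DecidableEq W] {Γ : SimpleGraph W} {s t : W}

lemma idxOf_support_start (p : Γ.Walk s t) : p.support.idxOf s = 0 := by
  rw [← p.cons_tail_support]
  exact List.idxOf_cons_self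

lemma IsPath.idxOf_support_end {p : Γ.Walk s t} (hp : p.IsPath) :
    p.support.idxOf t = p.length := by
  induction p with
  | nil => simp
  | @cons a _ c _ q ih =>
    rw [cons_isPath_iff] at hp
    have hac : a ≠ c := fun h => hp.2 (h ▸ q.end_mem_support)
    rw [support_cons, length_cons, List.idxOf_cons_ne _ hac, ih hp.1]

lemma IsPath.idxOf_support_of_mem_edges {p : Γ.Walk s t} (hp : p.IsPath) {c d : W}
    (he : s(c, d) ∈ p.edges) :
    p.support.idxOf d = p.support.idxOf c + 1 ∨ p.support.idxOf c = p.support.idxOf d + 1 := by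
  induction p with
  | nil => simp at he
  | @cons a b _ _ q ih =>
    rw [cons_isPath_iff] at hp
    rw [edges_cons, List.mem_cons] at he
    rw [support_cons]
    rcases he with he | he
    · have hba : b ≠ a := fun h => hp.2 (h ▸ q.start_mem_support)
      have hb : q.support.idxOf b = 0 := q.idxOf_support_start
      rcases Sym2.eq_iff.mp he with ⟨rfl, rfl⟩ | ⟨rfl, rfl⟩
      · left
        rw [List.idxOf_cons_self, List.idxOf_cons_ne _ hba.symm, hb]
      · right
        rw [List.idxOf_cons_self, List.idxOf_cons_ne _ hba.symm, hb]
    · have hac : a ≠ c := fun h => hp.2 (h ▸ q.fst_mem_support_of_mem_edges he)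
      have had : a ≠ d := fun h => hp.2 (h ▸ q.snd_mem_support_of_mem_edges he)
      rw [List.idxOf_cons_ne _ hac, List.idxOf_cons_ne _ had]
      rcases ih hp.1 he with h | h <;> omega

end SimpleGraph.Walk

section Subdivision

variable {V W : Type*} {G : SimpleGraph V} {H : SimpleGraph W} {ℓ : ℕ} {φ : V → W}
  {σ : ∀ u v : V, G.Adj u v → H.Walk (φ u) (φ v)}

lemma mem_support_subdivWalk {u v : V} (Q : G.Walk u v) {z : W}
    (hz : z ∈ (subdivWalk σ Q).support) :
    (∃ c ∈ Q.support, z = φ c) ∨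
      ∃ a b, ∃ hab : G.Adj a b, a ∈ Q.support ∧ b ∈ Q.support ∧ z ∈ (σ a b hab).support := by
  induction Q with
  | @nil x => exact Or.inl ⟨x, by simp, by simpa [subdivWalk] using hz⟩
  | @cons a b _ hab q ih =>
    rw [subdivWalk, Walk.mem_support_append_iff] at hz
    rcases hz with hz | hz
    · exact Or.inr ⟨a, b, hab, by simp, by simp, hz⟩
    · rcases ih hz with ⟨c, hc, rfl⟩ | ⟨a', b', hab', ha', hb', hz'⟩
      · exact Or.inl ⟨c, by simp [hc], rfl⟩
      · exact Or.inr ⟨a', b', hab', by simp [ha'], by simp [hb'], hz'⟩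

namespace IsSubdivision

variable (hsub : IsSubdivision G H ℓ φ σ)
include hsub

lemma exists_mem_edges_of_adj {x : V} {y : W} (hxy : H.Adj (φ x) y) :
    ∃ e, ∃ hxe : G.Adj x e, s(φ x, y) ∈ (σ x e hxe).edges := by
  obtain ⟨a, b, hab, he⟩ := (hsub.adj_iff _ _).mp hxy
  rcases hsub.ends a b hab _ ((σ a b hab).fst_mem_support_of_mem_edges he) ⟨x, rfl⟩ with
    hxa | hxb
  · obtain rfl := hsub.inj hxa
    exact ⟨b, hab, he⟩
  · obtain rfl := hsub.inj hxb
    refine ⟨a, hab.symm, ?_⟩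
    rwa [hsub.symm, Walk.edges_reverse, List.mem_reverse]

lemma mem_edges_of_adj_of_notMem_range {a b : V} (hab : G.Adj a b) {z y : W}
    (hz : z ∈ (σ a b hab).support) (hzφ : z ∉ Set.range φ) (hzy : H.Adj z y) :
    s(z, y) ∈ (σ a b hab).edges := by
  obtain ⟨a', b', hab', he⟩ := (hsub.adj_iff z y).mp hzy
  by_cases hedge : s(a', b') = s(a, b)
  · rcases Sym2.eq_iff.mp hedge with ⟨rfl, rfl⟩ | ⟨rfl, rfl⟩
    · exact he
    · rwa [hsub.symm, Walk.edges_reverse, List.mem_reverse]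
  · exact absurd (hsub.disjoint a' b' hab' a b hab hedge z
      ((σ a' b' hab').fst_mem_support_of_mem_edges he) hz) hzφ

lemma end_mul_dist_le_of_mem_range [DecidableEq W] {a b c : V} (hab : G.Adj a b) {y : W}
    (hy : y ∈ (σ a b hab).support) (hyφ : y ∈ Set.range φ) {n : ℕ}
    (hn : ∀ x, y = φ x → ℓ * G.dist x c ≤ n) :
    ℓ * G.dist a c + (σ a b hab).support.idxOf y ≤ n ∨
      ℓ * G.dist b c + (ℓ - (σ a b hab).support.idxOf y) ≤ n := by
  classical
  rcases hsub.ends a b hab y hy hyφ with rfl | rfl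
  · left
    simpa [Walk.idxOf_support_start] using hn a rfl
  · right
    simpa [(hsub.isPath a b hab).idxOf_support_end, hsub.len] using hn b rfl

/-- `idxOf y` is the distance from `φ a` to `y` along the replacement path of `ab`. The two
bounds are proved together so that the induction on `T` can pass through original vertices. -/
lemma mul_dist_le_length_s12 [DecidableEq W] (hG : G.Connected) {c : V} {y : W}
    (T : H.Walk y (φ c)) :
    (∀ x, y = φ x → ℓ * G.dist x c ≤ T.length) ∧
      ∀ a b (hab : G.Adj a b), y ∈ (σ a b hab).support →
        ℓ * G.dist a c + (σ a b hab).support.idxOf y ≤ T.length ∨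
          ℓ * G.dist b c + (ℓ - (σ a b hab).support.idxOf y) ≤ T.length := by
  generalize hφc : φ c = t at T
  induction T with
  | @nil y =>
    have hc : ∀ x, y = φ x → ℓ * G.dist x c ≤ (Walk.nil : H.Walk y y).length := by
      rintro x hx
      simp [hsub.inj (hφc.trans hx)]
    exact ⟨hc, fun a b hab hy => hsub.end_mul_dist_le_of_mem_range hab hy ⟨c, hφc⟩ hc⟩
  | @cons y y' _ hyy' T ih =>
    specialize ih hφc
    have horig : ∀ x, y = φ x → ℓ * G.dist x c ≤ (Walk.cons hyy' T).length := by
      rintro x rfl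
      obtain ⟨e, hxe, he⟩ := hsub.exists_mem_edges_of_adj hyy'
      have hidx := (hsub.isPath x e hxe).idxOf_support_of_mem_edges he
      rw [Walk.idxOf_support_start] at hidx
      have hdist : G.dist x c ≤ G.dist e c + 1 := by
        have := hG.dist_triangle (u := x) (v := e) (w := c)
        rw [dist_eq_one_iff_adj.mpr hxe] at this
        omega
      have := hsub.one_le
      rw [Walk.length_cons]
      rcases ih.2 x e hxe ((σ x e hxe).snd_mem_support_of_mem_edges he) with h | h
      · omega
      · have := Nat.mul_le_mul_left ℓ hdist
        rw [mul_add, mul_one] at this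
        omega
    refine ⟨horig, fun a b hab hy => ?_⟩
    by_cases hyφ : y ∈ Set.range φ
    · exact hsub.end_mul_dist_le_of_mem_range hab hy hyφ horig
    · have he := hsub.mem_edges_of_adj_of_notMem_range hab hy hyφ hyy'
      have hidx := (hsub.isPath a b hab).idxOf_support_of_mem_edges he
      rw [Walk.length_cons]
      rcases ih.2 a b hab ((σ a b hab).snd_mem_support_of_mem_edges he) with h | h
      · left; omega
      · right; omega

end IsSubdivision

end Subdivision

theorem stmt_12_general {V W : Type*} (G : SimpleGraph V) (hG : G.Connected)
    (H : SimpleGraph W) (ℓ : ℕ)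
    (φ : V → W) (σ : ∀ u v : V, G.Adj u v → H.Walk (φ u) (φ v))
    (hsub : IsSubdivision G H ℓ φ σ)
    (u v : V) (Q : G.Walk u v)
    (w : V) (r : ℕ)
    (hnear : ∃ z ∈ (subdivWalk σ Q).support, H.dist (φ w) z < (r + 1) * ℓ) :
    ∃ z ∈ Q.support, G.dist w z ≤ r := by
  classical
  obtain ⟨z, hz, hdist⟩ := hnear
  have hreach : H.Reachable z (φ w) := by
    obtain ⟨Qwu⟩ := hG.preconnected w u
    exact (Walk.reachable (subdivWalk σ Qwu)).trans
      ⟨(subdivWalk σ Q).takeUntil z hz⟩ |>.symm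
  obtain ⟨T, hT⟩ := hreach.exists_walk_length_eq_dist
  have hT' : T.length < ℓ * (r + 1) := by rw [hT, SimpleGraph.dist_comm, mul_comm]; exact hdist
  have hlt : ∀ c, ℓ * G.dist c w ≤ T.length → G.dist w c ≤ r := fun c hc => by
    rw [SimpleGraph.dist_comm]
    exact Nat.lt_succ_iff.mp (Nat.lt_of_mul_lt_mul_left (hc.trans_lt hT'))
  have hbound := hsub.mul_dist_le_length_s12 hG T
  rcases mem_support_subdivWalk Q hz with ⟨c, hc, rfl⟩ | ⟨a, b, hab, ha, hb, hzab⟩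
  · exact ⟨c, hc, hlt c (hbound.1 c rfl)⟩
  · rcases hbound.2 a b hab hzab with h | h
    · exact ⟨a, ha, hlt a (by omega)⟩
    · exact ⟨b, hb, hlt b (by omega)⟩

/-- Let `H = G_ℓ` be the `ℓ`-subdivision (`ℓ ≥ 1`) of a connected graph `G`, let
`P = subdivWalk σ Q` be an isometric path of `H` between two original vertices
`φ u, φ v`, where `Q = G(P)` is the path of `G` whose `ℓ`-subdivision is `P`. If `w` is
an original vertex with `d_H(φ w, V(P)) < (r+1)ℓ` for a positive integer `r`, then
`d_G(w, V(Q)) ≤ r`. -/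
theorem stmt_12 {V W : Type*} (G : SimpleGraph V) (hG : G.Connected)
    (H : SimpleGraph W) (ℓ : ℕ) (hℓ : 1 ≤ ℓ)
    (φ : V → W) (σ : ∀ u v : V, G.Adj u v → H.Walk (φ u) (φ v))
    (hsub : IsSubdivision G H ℓ φ σ)
    (u v : V) (Q : G.Walk u v) (hQpath : Q.IsPath)
    (hPiso : IsGeodesicWalk H (subdivWalk σ Q))
    (w : V) (r : ℕ) (hr : 1 ≤ r)
    (hnear : ∃ z ∈ (subdivWalk σ Q).support, H.dist (φ w) z < (r + 1) * ℓ) :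
    ∃ z ∈ Q.support, G.dist w z ≤ r :=
  stmt_12_general G hG H ℓ φ σ hsub u v Q w r hnear
end

section
/- Let G be a connected δ-thin graph, let r, u, v, x be vertices of G with d(r,u) ≤ d(r,v), and let R ≥ 0 be an integer. Suppose there exists an isometric path P from r to x such that d(u, V(P)) ≤ R and d(v, V(P)) ≤ R. Then for every isometric path σ from r to v, d(u, V(σ)) ≤ R + 2δ. -/
open SimpleGraph

/-! Put `k = d(r,u) - R`. Since `u` and `v` lie within `R` of the geodesic `P`, the Gromov
products `(x|u)_r` and `(x|v)_r` are at least `k`, so by thinness the vertex at distance `k`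
from `r` on `P` is `δ`-close both to the vertex at distance `k` on `σ` and to the vertex at
distance `k` on a geodesic from `r` to `u`; the latter is within `R` of `u`. -/

namespace SimpleGraph.Walk

variable {V : Type*} {G : SimpleGraph V} {s t : V}

lemma dist_getVert_le_length_sub (p : G.Walk s t) (i : ℕ) :
    G.dist (p.getVert i) t ≤ p.length - i := by
  simpa only [drop_length] using dist_le (p.drop i)

lemma dist_getVert_le (p : G.Walk s t) (i : ℕ) : G.dist s (p.getVert i) ≤ i :=
  (dist_le (p.take i)).trans (by simp only [take_length, inf_le_left])

lemma dist_add_dist_le_length_of_mem_support (p : G.Walk s t) {a : V} (ha : a ∈ p.support) :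
    G.dist s a + G.dist a t ≤ p.length := by
  obtain ⟨n, rfl, hn⟩ := mem_support_iff_exists_getVert.mp ha
  have := p.dist_getVert_le n
  have := p.dist_getVert_le_length_sub n
  omega

end SimpleGraph.Walk

section Thin

variable {V : Type*} {G : SimpleGraph V}

/-- In Gromov-product terms: `d(r,w) - R ≤ (x|w)_r`. -/
lemma two_mul_sub_add_dist_le_of_near_geodesic (hG : G.Connected) {r x w a : V} {R : ℕ}
    (P : G.Walk r x) (hP : IsGeodesicWalk G P) (ha : a ∈ P.support) (hwa : G.dist w a ≤ R) :
    2 * (G.dist r w - R) + G.dist x w ≤ G.dist r x + G.dist r w := by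
  have hrw : G.dist r w ≤ G.dist r a + G.dist a w := hG.dist_triangle
  have hxw : G.dist x w ≤ G.dist x a + G.dist a w := hG.dist_triangle
  have hxrw : G.dist x w ≤ G.dist x r + G.dist r w := hG.dist_triangle
  have hP' := P.dist_add_dist_le_length_of_mem_support ha
  have : G.dist a w = G.dist w a := dist_comm
  have : G.dist a x = G.dist x a := dist_comm
  have : G.dist x r = G.dist r x := dist_comm
  unfold IsGeodesicWalk at hP
  omega

/-- The hypothesis `hk` is `k ≤ (x|v)_r`, cleared of denominators. -/
lemma IsThin.dist_getVert_le (hG : G.Connected) {δ : ℝ} (hthin : IsThin G δ) {r x v : V}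
    (P : G.Walk r x) (hP : IsGeodesicWalk G P) (σ : G.Walk r v) (hσ : IsGeodesicWalk G σ)
    {k : ℕ} (hk : 2 * k + G.dist x v ≤ G.dist r x + G.dist r v) :
    (G.dist (P.getVert k) (σ.getVert k) : ℝ) ≤ δ := by
  obtain ⟨Q, hQ⟩ := hG.exists_walk_length_eq_dist x v
  have hrv : G.dist r v ≤ G.dist r x + G.dist x v := hG.dist_triangle
  have hkP : k ≤ P.length := by unfold IsGeodesicWalk at hP; omega
  refine (hthin r x v P σ Q hP hσ hQ k hkP).1 ?_
  have hk' : ((2 * k + G.dist x v : ℕ) : ℝ) ≤ ((G.dist r x + G.dist r v : ℕ) : ℝ) := by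
    exact_mod_cast hk
  unfold gromov
  rw [dist_comm (u := x) (v := r)]
  push_cast at hk'
  linarith

end Thin

theorem stmt_14_general {V : Type*} (G : SimpleGraph V) (hG : G.Connected)
    (δ : ℝ) (hthin : IsThin G δ)
    (r u v x : V) (hd : G.dist r u ≤ G.dist r v) (R : ℕ)
    (P : G.Walk r x) (hP : IsGeodesicWalk G P)
    (hu : ∃ w ∈ P.support, G.dist u w ≤ R)
    (hv : ∃ w ∈ P.support, G.dist v w ≤ R) :
    ∀ σ : G.Walk r v, IsGeodesicWalk G σ →
      ∃ w ∈ σ.support, (G.dist u w : ℝ) ≤ (R : ℝ) + 2 * δ := by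
  intro σ hσ
  obtain ⟨a, ha, hua⟩ := hu
  obtain ⟨b, hb, hvb⟩ := hv
  obtain ⟨T, hT⟩ := hG.exists_walk_length_eq_dist r u
  set k := G.dist r u - R with hk
  have hu' := two_mul_sub_add_dist_le_of_near_geodesic hG P hP ha hua
  have hv' := two_mul_sub_add_dist_le_of_near_geodesic hG P hP hb hvb
  have hPT := hthin.dist_getVert_le hG P hP T hT (k := k) hu'
  have hPσ := hthin.dist_getVert_le hG P hP σ hσ (k := k) (by omega)
  have hTu : G.dist (T.getVert k) u ≤ R := by
    have := T.dist_getVert_le_length_sub k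
    rw [hT] at this
    omega
  have hkσ : k ≤ σ.length := by unfold IsGeodesicWalk at hσ; omega
  refine ⟨σ.getVert k, Walk.mem_support_iff_exists_getVert.mpr ⟨k, rfl, hkσ⟩, ?_⟩
  have htri : G.dist u (σ.getVert k) ≤
      G.dist (T.getVert k) u + G.dist (P.getVert k) (T.getVert k)
        + G.dist (P.getVert k) (σ.getVert k) := by
    have h₁ : G.dist u (σ.getVert k) ≤
        G.dist u (T.getVert k) + G.dist (T.getVert k) (σ.getVert k) :=
      hG.dist_triangle
    have h₂ : G.dist (T.getVert k) (σ.getVert k) ≤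
        G.dist (T.getVert k) (P.getVert k) + G.dist (P.getVert k) (σ.getVert k) :=
      hG.dist_triangle
    have : G.dist u (T.getVert k) = G.dist (T.getVert k) u := dist_comm
    have : G.dist (T.getVert k) (P.getVert k) = G.dist (P.getVert k) (T.getVert k) := dist_comm
    omega
  have htri' := (Nat.cast_le (α := ℝ)).mpr htri
  have hTu' := (Nat.cast_le (α := ℝ)).mpr hTu
  push_cast at htri'
  linarith

/-- In a connected `δ`-thin graph, if `d(r,u) ≤ d(r,v)` and some isometric path `P` from
`r` to `x` satisfies `d(u, V(P)) ≤ R` and `d(v, V(P)) ≤ R`, then every isometric path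
`σ` from `r` to `v` satisfies `d(u, V(σ)) ≤ R + 2δ`. -/
theorem stmt_14 {V : Type*} (G : SimpleGraph V) (hG : G.Connected)
    (δ : ℝ) (hδ : 0 ≤ δ) (hthin : IsThin G δ)
    (r u v x : V) (hd : G.dist r u ≤ G.dist r v) (R : ℕ)
    (P : G.Walk r x) (hP : IsGeodesicWalk G P)
    (hu : ∃ w ∈ P.support, G.dist u w ≤ R)
    (hv : ∃ w ∈ P.support, G.dist v w ≤ R) :
    ∀ σ : G.Walk r v, IsGeodesicWalk G σ →
      ∃ w ∈ σ.support, (G.dist u w : ℝ) ≤ (R : ℝ) + 2 * δ :=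
  stmt_14_general G hG δ hthin r u v x hd R P hP hu hv
end
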